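/- Root insertion equals reversed leaf insertion: for any word u ∈ A*, the right binary search tree obtained by root insertions of the letters of u from left to right equals the right binary search tree obtained by leaf insertions of the letters of u from right to left. -/

import Mathlib

open scoped Classical

/-- Baxter adjacency relations on words over the alphabet of natural numbers. -/
def BaxterAdj (w w' : List ℕ) : Prop :=
  (∃ (a b c d : ℕ) (u v : List ℕ), a ≤ b ∧ b < c ∧ c ≤ d ∧
      w = c :: (u ++ a :: d :: (v ++ [b])) ∧ w' = c :: (u ++ d :: a :: (v ++ [b]))) ∨
  (∃ (a b c d : ℕ) (u v : List ℕ), a < b ∧ b ≤ c ∧ c < d ∧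
      w = b :: (u ++ d :: a :: (v ++ [c])) ∧ w' = b :: (u ++ a :: d :: (v ++ [c])))

/-- One rewriting step: an adjacency applied inside a word (congruence context). -/
def BaxterStep (w w' : List ℕ) : Prop :=
  ∃ (p s u v : List ℕ), BaxterAdj u v ∧ w = p ++ u ++ s ∧ w' = p ++ v ++ s

/-- The Baxter congruence: the equivalence generated by the Baxter steps. -/
def BaxterEquiv : List ℕ → List ℕ → Prop := Relation.EqvGen BaxterStep

/-- Sylvester adjacency: a c u b ≡ c a u b when a ≤ b < c. -/
def SylvAdj (w w' : List ℕ) : Prop :=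
  ∃ (a b c : ℕ) (u : List ℕ), a ≤ b ∧ b < c ∧
    w = a :: c :: (u ++ [b]) ∧ w' = c :: a :: (u ++ [b])

def SylvStep (w w' : List ℕ) : Prop :=
  ∃ (p s u v : List ℕ), SylvAdj u v ∧ w = p ++ u ++ s ∧ w' = p ++ v ++ s

def SylvEquiv : List ℕ → List ℕ → Prop := Relation.EqvGen SylvStep

/-- #-sylvester adjacency: b u a c ≡ b u c a when a < b ≤ c. -/
def SylvHAdj (w w' : List ℕ) : Prop :=
  ∃ (a b c : ℕ) (u : List ℕ), a < b ∧ b ≤ c ∧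
    w = b :: (u ++ [a, c]) ∧ w' = b :: (u ++ [c, a])

def SylvHStep (w w' : List ℕ) : Prop :=
  ∃ (p s u v : List ℕ), SylvHAdj u v ∧ w = p ++ u ++ s ∧ w' = p ++ v ++ s

def SylvHEquiv : List ℕ → List ℕ → Prop := Relation.EqvGen SylvHStep

/-- The standardized word of `u`: position `i` receives the rank of the letter `u i`
(ties broken from left to right), ranks starting at `1`. -/
def std (u : List ℕ) : List ℕ :=
  (List.range u.length).map fun i =>
    ((List.range u.length).filter fun j =>
      decide (u.getD j 0 < u.getD i 0 ∨ (u.getD j 0 = u.getD i 0 ∧ j < i))).length + 1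

/-- The maximal letter of a word. -/
def wordMax (u : List ℕ) : ℕ := u.foldr max 0

/-- The Schützenberger transformation: reverse and complement each letter w.r.t. max + 1. -/
def schutz (u : List ℕ) : List ℕ := u.reverse.map fun x => wordMax u + 1 - x

/-- Labeled binary trees. -/
inductive BT where
  | leaf : BT
  | node : BT → ℕ → BT → BT
deriving DecidableEq

/-- Leaf insertion into a left binary search tree. -/
def leafInsL : BT → ℕ → BT
  | .leaf, a => .node .leaf a .leaf
  | .node l b r, a => if a < b then .node (leafInsL l a) b r else .node l b (leafInsL r a)

/-- Leaf insertion into a right binary search tree. -/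
def leafInsR : BT → ℕ → BT
  | .leaf, a => .node .leaf a .leaf
  | .node l b r, a => if a ≤ b then .node (leafInsR l a) b r else .node l b (leafInsR r a)

/-- The lower restricted tree `T_{≤ a}` of a right binary search tree. -/
def splitLE : BT → ℕ → BT
  | .leaf, _ => .leaf
  | .node l b r, a => if b ≤ a then .node l b (splitLE r a) else splitLE l a

/-- The higher restricted tree `T_{> a}` of a right binary search tree. -/
def splitGT : BT → ℕ → BT
  | .leaf, _ => .leaf
  | .node l b r, a => if b ≤ a then splitGT r a else .node (splitGT l a) b r

/-- Root insertion into a right binary search tree. -/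
def rootIns (t : BT) (a : ℕ) : BT := .node (splitLE t a) a (splitGT t a)

/-- The left tree of the P-symbol: leaf insertions from left to right. -/
def insL (u : List ℕ) : BT := u.foldl leafInsL .leaf

/-- The right tree of the P-symbol: root insertions from left to right. -/
def insR (u : List ℕ) : BT := u.foldl rootIns .leaf

/-- The P-symbol of a word. -/
def Psymb (u : List ℕ) : BT × BT := (insL u, insR u)

/-- Unlabeled binary trees. -/
inductive UBT where
  | leaf : UBT
  | node : UBT → UBT → UBT
deriving DecidableEq

/-- The shape of a labeled binary tree. -/
def shape : BT → UBT
  | .leaf => .leaf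
  | .node l _ r => .node (shape l) (shape r)

/-- The shape of the P-symbol of a word. -/
def Pshape (u : List ℕ) : UBT × UBT := (shape (insL u), shape (insR u))

/-- Number of internal nodes. -/
def sizeU : UBT → ℕ
  | .leaf => 0
  | .node l r => sizeU l + sizeU r + 1

/-- Orientations of the leaves, from left to right: `true` means right-oriented
(the leaf is the right child of its parent); the parameter is the orientation
assigned if the tree is reduced to a leaf. -/
def loU : UBT → Bool → List Bool
  | .leaf, b => [b]
  | .node l r, _ => loU l false ++ loU r true

/-- Leaf orientations of a labeled binary tree. -/
def loB : BT → Bool → List Bool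
  | .leaf, b => [b]
  | .node l _ r, _ => loB l false ++ loB r true

/-- The canopy: orientations of the leaves except the first and the last one. -/
def canU (t : UBT) : List Bool := ((loU t false).drop 1).dropLast

/-- A pair of twin binary trees: same number of nodes and complementary canopies. -/
def IsTwin (J : UBT × UBT) : Prop :=
  sizeU J.1 = sizeU J.2 ∧ (canU J.1).length = (canU J.2).length ∧
    ∀ i < (canU J.1).length, (canU J.1).getD i false ≠ (canU J.2).getD i false

/-- `σ` is (the word of) a permutation of `{1, …, n}`. -/
def IsPerm (n : ℕ) (σ : List ℕ) : Prop := σ.Perm (List.range' 1 n)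

/-- Covering-type step of the right permutohedron (weak) order: exchange of two
adjacent letters `a < b`. -/
def PermutoStep (σ ν : List ℕ) : Prop :=
  ∃ (p s : List ℕ) (a b : ℕ), a < b ∧ σ = p ++ a :: b :: s ∧ ν = p ++ b :: a :: s

/-- The right permutohedron (weak) order. -/
def PermutoLe : List ℕ → List ℕ → Prop := Relation.ReflTransGen PermutoStep

/-- Baxter permutations: avoiding the generalized patterns 2-41-3 and 3-14-2. -/
def IsBaxterPerm (σ : List ℕ) : Prop :=
  ∀ i j k, i < j → j + 1 < k → k < σ.length →
    ¬(σ.getD (j+1) 0 < σ.getD i 0 ∧ σ.getD i 0 < σ.getD k 0 ∧ σ.getD k 0 < σ.getD j 0) ∧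
    ¬(σ.getD j 0 < σ.getD k 0 ∧ σ.getD k 0 < σ.getD i 0 ∧ σ.getD i 0 < σ.getD (j+1) 0)

/-!
Splitting a tree at `b` commutes with leaf insertion of `a`: the new leaf `a` simply lands in
`T_{≤ b}` or in `T_{> b}` according as `a ≤ b`. Hence root insertion of `b` commutes with leaf
insertion of `a`. Since root insertion into the empty tree is leaf insertion, the first letter
of `a :: v`, inserted at the root before the letters of `v`, may as well be leaf-inserted after
all of them, and induction on the word concludes.
-/

lemma splitLE_leafInsR (t : BT) (a b : ℕ) :
    splitLE (leafInsR t a) b = if a ≤ b then leafInsR (splitLE t b) a else splitLE t b := by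
  induction t with
  | leaf => split_ifs <;> simp [leafInsR, splitLE, *]
  | node l c r ihl ihr =>
    simp only [leafInsR]
    split_ifs <;> simp only [splitLE] <;> split_ifs <;> simp_all [leafInsR] <;> omega

lemma splitGT_leafInsR (t : BT) (a b : ℕ) :
    splitGT (leafInsR t a) b = if a ≤ b then splitGT t b else leafInsR (splitGT t b) a := by
  induction t with
  | leaf => split_ifs <;> simp [leafInsR, splitGT, *]
  | node l c r ihl ihr =>
    simp only [leafInsR]
    split_ifs <;> simp only [splitGT] <;> split_ifs <;> simp_all [leafInsR] <;> omega

lemma rootIns_leafInsR (t : BT) (a b : ℕ) :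
    rootIns (leafInsR t a) b = leafInsR (rootIns t b) a := by
  by_cases hab : a ≤ b <;> simp [rootIns, leafInsR, splitLE_leafInsR, splitGT_leafInsR, hab]

/-- root insertions from left to right give the same right binary
search tree as leaf insertions from right to left. -/
theorem rootInsertion_eq_reversed_leafInsertion (u : List ℕ) :
    insR u = u.foldr (fun a t => leafInsR t a) BT.leaf := by
  induction u with
  | nil => rfl
  | cons a v ih =>
    calc insR (a :: v) = v.foldl rootIns (leafInsR .leaf a) := rfl
      _ = leafInsR (insR v) a := List.foldl_hom (leafInsR · a) fun t b => rootIns_leafInsR t a b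
      _ = (a :: v).foldr (fun a t => leafInsR t a) .leaf := by rw [ih]; rfl
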